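/- arXiv:2008.00185 — 5 statements merged into one kernel-verified Lean document; each statement's English description precedes it below -/
import Mathlib

section
/- For every p in (1,∞), the integral of (1-s^p)^{-1/p} over s ∈ [-1,1] equals 2π/(p·sin(π/p)). -/
open Real MeasureTheory Set

/-! Folding `[-1, 1]` onto `[0, 1]` and substituting `u = s ^ p` turns `π_p` into
`(2 / p) B(1/p, 1 - 1/p) = (2 / p) Γ(1/p) Γ(1 - 1/p)`, and Euler's reflection formula gives
`Γ(1/p) Γ(1 - 1/p) = π / sin (π / p)`. -/

theorem intervalIntegral_comp_abs {f : ℝ → ℝ} {c : ℝ} (hc : 0 ≤ c) :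
    ∫ x in -c..c, f |x| = 2 * ∫ x in 0..c, f x := by
  have hind : (fun x => (Iic c).indicator f |x|) = (Icc (-c) c).indicator (fun x => f |x|) := by
    ext x
    simp only [indicator, mem_Iic, mem_Icc, abs_le]
  have key := integral_comp_abs (f := (Iic c).indicator f)
  rw [hind, integral_indicator measurableSet_Icc, setIntegral_indicator measurableSet_Iic,
    Ioi_inter_Iic, integral_Icc_eq_integral_Ioc] at key
  rw [intervalIntegral.integral_of_le (by linarith), intervalIntegral.integral_of_le hc, key]

theorem intervalIntegral_comp_rpow_zero_one {E : Type*} [NormedAddCommGroup E] [NormedSpace ℝ E]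
    (g : ℝ → E) {p : ℝ} (hp : 0 < p) :
    ∫ x in 0..1, (p * x ^ (p - 1)) • g (x ^ p) = ∫ y in 0..1, g y := by
  have key := integral_comp_rpow_Ioi ((Iic 1).indicator g) hp.ne'
  have hind : EqOn (fun x : ℝ => (|p| * x ^ (p - 1)) • (Iic 1).indicator g (x ^ p))
      ((Iic 1).indicator fun x => (p * x ^ (p - 1)) • g (x ^ p)) (Ioi 0) := by
    intro x (hx : 0 < x)
    have hle : x ^ p ≤ 1 ↔ x ≤ 1 := by
      simpa only [one_rpow] using rpow_le_rpow_iff hx.le zero_le_one hp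
    simp only [indicator, mem_Iic, hle, abs_of_pos hp, smul_ite, smul_zero]
  rw [setIntegral_congr_fun measurableSet_Ioi hind, setIntegral_indicator measurableSet_Iic,
    setIntegral_indicator measurableSet_Iic, Ioi_inter_Iic] at key
  rw [intervalIntegral.integral_of_le zero_le_one, intervalIntegral.integral_of_le zero_le_one, key]

theorem intervalIntegral_rpow_mul_one_sub_rpow_eq_beta {u v : ℝ} (hu : 0 < u) (hv : 0 < v) :
    ∫ x in 0..1, x ^ (u - 1) * (1 - x) ^ (v - 1) = ProbabilityTheory.beta u v := by
  rw [ProbabilityTheory.beta_eq_betaIntegralReal u v hu hv, Complex.betaIntegral,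
    ← Complex.ofReal_re (∫ x in (0:ℝ)..1, _), ← intervalIntegral.integral_ofReal]
  congr 1
  refine intervalIntegral.integral_congr fun x hx => ?_
  rw [uIcc_of_le zero_le_one] at hx
  push_cast
  rw [Complex.ofReal_cpow hx.1, Complex.ofReal_cpow (sub_nonneg.2 hx.2)]
  push_cast
  rfl

theorem intervalIntegral_rpow_mul_one_sub_rpow_neg {u : ℝ} (hu₀ : 0 < u) (hu₁ : u < 1) :
    ∫ x in 0..1, x ^ (u - 1) * (1 - x) ^ (-u) = π / sin (π * u) := by
  have h := intervalIntegral_rpow_mul_one_sub_rpow_eq_beta hu₀ (sub_pos.2 hu₁)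
  rw [sub_sub_cancel_left, ProbabilityTheory.beta, add_sub_cancel, Real.Gamma_one, div_one,
    Real.Gamma_mul_Gamma_one_sub] at h
  exact h

theorem rpow_sub_one_mul_rpow_rpow_one_div_sub_one {p x : ℝ} (hp : p ≠ 0) (hx : 0 < x) :
    x ^ (p - 1) * (x ^ p) ^ (1 / p - 1) = 1 := by
  rw [← rpow_mul hx.le, ← rpow_add hx, mul_sub, mul_one_div_cancel hp, mul_one,
    sub_add_sub_cancel', sub_self, rpow_zero]

/-- For every `p ∈ (1,∞)`, `π_p := ∫_{-1}^{1} (1-|s|^p)^{-1/p} ds = 2π/(p·sin(π/p))`. -/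
theorem pi_p_eq (p : ℝ) (hp : 1 < p) :
    ∫ s in (-1:ℝ)..1, (1 - |s| ^ p) ^ (-(1:ℝ)/p) = 2 * π / (p * Real.sin (π / p)) := by
  have hp₀ : 0 < p := by linarith
  set g : ℝ → ℝ := fun y => y ^ (1 / p - 1) * (1 - y) ^ (-(1 / p))
  have hsubst : ∀ x : ℝ, 0 < x →
      (1 - x ^ p) ^ (-(1:ℝ)/p) = p⁻¹ * ((p * x ^ (p - 1)) • g (x ^ p)) := by
    intro x hx
    calc (1 - x ^ p) ^ (-(1:ℝ)/p)
        = p⁻¹ * p * (x ^ (p - 1) * (x ^ p) ^ (1 / p - 1)) * (1 - x ^ p) ^ (-(1 / p)) := by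
          rw [rpow_sub_one_mul_rpow_rpow_one_div_sub_one hp₀.ne' hx, inv_mul_cancel₀ hp₀.ne',
            neg_div, one_mul, one_mul]
      _ = p⁻¹ * ((p * x ^ (p - 1)) • g (x ^ p)) := by
          simp only [g, smul_eq_mul]
          ring
  calc ∫ s in (-1:ℝ)..1, (1 - |s| ^ p) ^ (-(1:ℝ)/p)
      = 2 * ∫ x in 0..1, (1 - x ^ p) ^ (-(1:ℝ)/p) :=
        intervalIntegral_comp_abs (f := fun x => (1 - x ^ p) ^ (-(1:ℝ)/p)) zero_le_one
    _ = 2 * (p⁻¹ * ∫ x in 0..1, (p * x ^ (p - 1)) • g (x ^ p)) := by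
        rw [← intervalIntegral.integral_const_mul p⁻¹]
        congr 1
        refine intervalIntegral.integral_congr_ae (Filter.Eventually.of_forall fun x hx => ?_)
        rw [uIoc_of_le zero_le_one] at hx
        exact hsubst x hx.1
    _ = 2 * (p⁻¹ * (π / sin (π * (1 / p)))) := by
        rw [intervalIntegral_comp_rpow_zero_one g hp₀,
          intervalIntegral_rpow_mul_one_sub_rpow_neg (by positivity) ((div_lt_one hp₀).2 hp)]
    _ = 2 * π / (p * Real.sin (π / p)) := by
        rw [mul_one_div]
        field_simp
end

section
/- On the open interval (-π_p/2, π_p/2), the function sin_p satisfies the ODE (d/dt)(|sin_p'|^{p-2} sin_p') + (p-1)|sin_p|^{p-2} sin_p = 0. -/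
/-!
`pArcsin p x = ∫₀ˣ (1 - |s|^p)^(-1/p) ds` is odd and strictly increasing on `[-1, 1]` (the
integrand is integrable there because `-1/p > -1`), with `pArcsin p (±1) = ±π_p/2`, and `sin_p`
is its inverse. The inverse function rule gives `sin_p' = (1 - |sin_p|^p)^(1/p)`, hence
`|sin_p'|^(p-2) sin_p' = (1 - |sin_p|^p)^((p-1)/p)`, and the chain rule together with
`(|x|^p)' = p |x|^(p-2) x` turns the derivative of the latter into `-(p-1) |sin_p|^(p-2) sin_p`.
-/

open Real Set Filter Topology MeasureTheory intervalIntegral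

noncomputable section

def pSineIntegrand (p s : ℝ) : ℝ := (1 - |s| ^ p) ^ (-(1:ℝ) / p)

def pArcsin (p x : ℝ) : ℝ := ∫ s in (0:ℝ)..x, pSineIntegrand p s

end

variable {p : ℝ}

lemma pSineIntegrand_neg (p s : ℝ) : pSineIntegrand p (-s) = pSineIntegrand p s := by
  simp [pSineIntegrand]

lemma one_sub_abs_rpow_pos (hp : 0 < p) {s : ℝ} (hs : s ∈ Ioo (-1:ℝ) 1) :
    0 < 1 - |s| ^ p := by
  have := rpow_lt_one (abs_nonneg s) (abs_lt.2 hs) hp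
  linarith

lemma pSineIntegrand_pos (hp : 0 < p) {s : ℝ} (hs : s ∈ Ioo (-1:ℝ) 1) :
    0 < pSineIntegrand p s :=
  rpow_pos_of_pos (one_sub_abs_rpow_pos hp hs) _

lemma inv_pSineIntegrand (hp : 0 < p) {s : ℝ} (hs : s ∈ Ioo (-1:ℝ) 1) :
    (pSineIntegrand p s)⁻¹ = (1 - |s| ^ p) ^ (1 / p) := by
  rw [pSineIntegrand, ← rpow_neg (one_sub_abs_rpow_pos hp hs).le, neg_div, neg_neg]

lemma measurable_pSineIntegrand (p : ℝ) : Measurable (pSineIntegrand p) := by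
  unfold pSineIntegrand; fun_prop

lemma continuousAt_pSineIntegrand (hp : 0 < p) {s : ℝ} (hs : s ∈ Ioo (-1:ℝ) 1) :
    ContinuousAt (pSineIntegrand p) s :=
  (continuous_const.sub (continuous_abs.rpow_const fun _ => Or.inr hp.le)).continuousAt.rpow_const
    (Or.inl (one_sub_abs_rpow_pos hp hs).ne')

lemma intervalIntegrable_pSineIntegrand_zero_one (hp : 1 < p) :
    IntervalIntegrable (pSineIntegrand p) volume 0 1 := by
  have hr : -1 < -(1:ℝ) / p := by
    rw [neg_div, neg_lt_neg_iff, div_lt_one (by linarith)]; exact hp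
  have hdom : IntervalIntegrable (fun s => (1 - s) ^ (-(1:ℝ) / p)) volume 0 1 := by
    simpa using (intervalIntegrable_rpow' (a := 1) (b := 0) hr).comp_sub_left 1
  rw [intervalIntegrable_iff_integrableOn_Ioo_of_le zero_le_one] at hdom ⊢
  refine hdom.mono' (measurable_pSineIntegrand p).aestronglyMeasurable ?_
  filter_upwards [ae_restrict_mem measurableSet_Ioo] with s ⟨hs0, hs1⟩
  rw [norm_of_nonneg (pSineIntegrand_pos (by linarith) ⟨by linarith, hs1⟩).le, pSineIntegrand,
    abs_of_pos hs0]
  have hsp : s ^ p ≤ s := by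
    simpa using rpow_le_rpow_of_exponent_ge hs0 hs1.le hp.le
  exact rpow_le_rpow_of_nonpos (by linarith) (by linarith)
    (div_nonpos_of_nonpos_of_nonneg (by norm_num) (by linarith))

lemma intervalIntegrable_pSineIntegrand (hp : 1 < p) {a b : ℝ} (ha : a ∈ Icc (-1:ℝ) 1)
    (hb : b ∈ Icc (-1:ℝ) 1) : IntervalIntegrable (pSineIntegrand p) volume a b := by
  have h01 := intervalIntegrable_pSineIntegrand_zero_one hp
  have h10 : IntervalIntegrable (pSineIntegrand p) volume (-1) 0 := by
    simpa [pSineIntegrand_neg] using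
      ((IntervalIntegrable.iff_comp_neg (f := pSineIntegrand p)).1 h01).symm
  refine (h10.trans h01).mono_set ?_
  rw [uIcc_subset_uIcc_iff_mem, uIcc_of_le (by norm_num)]
  exact ⟨ha, hb⟩

lemma pArcsin_neg (p x : ℝ) : pArcsin p (-x) = -pArcsin p x := by
  have h := integral_comp_neg (a := 0) (b := -x) (pSineIntegrand p)
  simp only [pSineIntegrand_neg, neg_neg, neg_zero] at h
  rw [pArcsin, pArcsin, h, integral_symm]

lemma two_mul_pArcsin_one (hp : 1 < p) :
    2 * pArcsin p 1 = ∫ s in (-1:ℝ)..1, pSineIntegrand p s := by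
  have hm : (-1:ℝ) ∈ Icc (-1) 1 := by norm_num
  have h0 : (0:ℝ) ∈ Icc (-1) 1 := by norm_num
  have h1 : (1:ℝ) ∈ Icc (-1) 1 := by norm_num
  rw [← integral_add_adjacent_intervals (intervalIntegrable_pSineIntegrand hp hm h0)
    (intervalIntegrable_pSineIntegrand hp h0 h1), integral_symm, ← pArcsin, ← pArcsin,
    pArcsin_neg]
  ring

lemma strictMonoOn_pArcsin (hp : 1 < p) : StrictMonoOn (pArcsin p) (Icc (-1) 1) := by
  intro x hx y hy hxy
  have hpos : 0 < ∫ s in x..y, pSineIntegrand p s :=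
    intervalIntegral_pos_of_pos_on (intervalIntegrable_pSineIntegrand hp hx hy)
      (fun s hs => pSineIntegrand_pos (by linarith)
        ⟨hx.1.trans_lt hs.1, hs.2.trans_le hy.2⟩) hxy
  have h0 : (0:ℝ) ∈ Icc (-1) 1 := by norm_num
  rw [← integral_interval_sub_left (intervalIntegrable_pSineIntegrand hp h0 hy)
    (intervalIntegrable_pSineIntegrand hp h0 hx)] at hpos
  exact sub_pos.1 hpos

lemma hasDerivAt_pArcsin (hp : 1 < p) {x : ℝ} (hx : x ∈ Ioo (-1:ℝ) 1) :
    HasDerivAt (pArcsin p) (pSineIntegrand p x) x :=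
  integral_hasDerivAt_right
    (intervalIntegrable_pSineIntegrand hp (by norm_num) (Ioo_subset_Icc_self hx))
    (measurable_pSineIntegrand p).stronglyMeasurable.stronglyMeasurableAtFilter
    (continuousAt_pSineIntegrand (by linarith) hx)

section LeftInverse

variable {f g : ℝ → ℝ} {a b : ℝ}

lemma mapsTo_Ioo_of_leftInvOn (hg : MapsTo g (Icc (f a) (f b)) (Icc a b))
    (hfg : LeftInvOn f g (Icc (f a) (f b))) : MapsTo g (Ioo (f a) (f b)) (Ioo a b) := by
  intro t ht
  have hgt := hg (Ioo_subset_Icc_self ht)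
  have hfgt := hfg (Ioo_subset_Icc_self ht)
  refine ⟨hgt.1.lt_of_ne ?_, hgt.2.lt_of_ne ?_⟩ <;> rintro rfl
  · exact ht.1.ne hfgt
  · exact ht.2.ne' hfgt

lemma continuousAt_of_leftInvOn (hf : StrictMonoOn f (Icc a b))
    (hg : MapsTo g (Icc (f a) (f b)) (Icc a b)) (hfg : LeftInvOn f g (Icc (f a) (f b))) {t : ℝ}
    (ht : t ∈ Ioo (f a) (f b)) : ContinuousAt g t := by
  have hmono : StrictMonoOn g (Icc (f a) (f b)) := fun s hs u hu hsu =>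
    lt_of_not_ge fun hle => hsu.not_ge (hfg hu ▸ hfg hs ▸ hf.monotoneOn (hg hu) (hg hs) hle)
  have hsurj : Icc a b ⊆ g '' Icc (f a) (f b) := fun y hy =>
    have hfy : f y ∈ Icc (f a) (f b) :=
      ⟨hf.monotoneOn ⟨le_rfl, hy.1.trans hy.2⟩ hy hy.1,
        hf.monotoneOn hy ⟨hy.1.trans hy.2, le_rfl⟩ hy.2⟩
    ⟨f y, hfy, hf.injOn (hg hfy) hy (hfg hfy)⟩
  have hgt := mapsTo_Ioo_of_leftInvOn hg hfg ht
  exact hmono.continuousAt_of_image_mem_nhds (Icc_mem_nhds ht.1 ht.2)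
    (mem_of_superset (Icc_mem_nhds hgt.1 hgt.2) hsurj)

lemma hasDerivAt_of_leftInvOn (hf : StrictMonoOn f (Icc a b))
    (hg : MapsTo g (Icc (f a) (f b)) (Icc a b)) (hfg : LeftInvOn f g (Icc (f a) (f b))) {t f' : ℝ}
    (ht : t ∈ Ioo (f a) (f b)) (hf' : HasDerivAt f f' (g t)) (hf'0 : f' ≠ 0) :
    HasDerivAt g f'⁻¹ t :=
  hf'.of_local_left_inverse (continuousAt_of_leftInvOn hf hg hfg ht) hf'0
    (eventually_of_mem (Icc_mem_nhds ht.1 ht.2) fun _ hs => hfg hs)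

end LeftInverse

lemma abs_rpow_one_div_rpow_sub_two_mul (hp : 0 < p) {x : ℝ} (hx : 0 < x) :
    |x ^ (1 / p)| ^ (p - 2) * x ^ (1 / p) = x ^ ((p - 1) / p) := by
  rw [abs_of_nonneg (rpow_nonneg hx.le _), ← rpow_mul hx.le, ← rpow_add hx]
  congr 1
  field_simp
  ring

lemma hasDerivAt_abs_deriv_rpow_mul_deriv (hp : 1 < p) {u : ℝ → ℝ} {t : ℝ}
    (hu : ∀ᶠ s in 𝓝 t, HasDerivAt u ((1 - |u s| ^ p) ^ (1 / p)) s) (hut : |u t| < 1) :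
    HasDerivAt (fun s => |deriv u s| ^ (p - 2) * deriv u s)
      (-(p - 1) * |u t| ^ (p - 2) * u t) t := by
  have hp0 : 0 < p := by linarith
  have hbase : HasDerivAt (fun s => 1 - |u s| ^ p)
      (-(p * |u t| ^ (p - 2) * u t * (1 - |u t| ^ p) ^ (1 / p))) t := by
    simpa using ((hasDerivAt_abs_rpow (u t) hp).comp t hu.self_of_nhds).const_sub 1
  have hpos : 0 < 1 - |u t| ^ p := one_sub_abs_rpow_pos hp0 (abs_lt.1 hut)
  have hcont : ContinuousAt (fun s => 1 - |u s| ^ p) t := hbase.continuousAt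
  have hflux : (fun s => |deriv u s| ^ (p - 2) * deriv u s)
      =ᶠ[𝓝 t] fun s => (1 - |u s| ^ p) ^ ((p - 1) / p) := by
    filter_upwards [hu, continuousAt_const.eventually_lt hcont hpos] with s hs hs0
    rw [hs.deriv, abs_rpow_one_div_rpow_sub_two_mul hp0 hs0]
  refine ((hbase.rpow_const (Or.inl hpos.ne')).congr_deriv ?_).congr_of_eventuallyEq hflux
  rw [show -(p * |u t| ^ (p - 2) * u t * (1 - |u t| ^ p) ^ (1 / p)) * ((p - 1) / p) *
      (1 - |u t| ^ p) ^ ((p - 1) / p - 1) = -(p - 1) * |u t| ^ (p - 2) * u t *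
      ((1 - |u t| ^ p) ^ (1 / p) * (1 - |u t| ^ p) ^ ((p - 1) / p - 1)) by field_simp,
    ← rpow_add hpos, show 1 / p + ((p - 1) / p - 1) = 0 by field_simp; ring, rpow_zero, mul_one]

/-- On `(-π_p/2, π_p/2)` the `p`-sine satisfies
`((|sinp'|^{p-2} sinp')' + (p-1)|sinp|^{p-2} sinp = 0`. -/
theorem p_sine_ode (p : ℝ) (hp : 1 < p)
    (pip : ℝ) (hpip : pip = ∫ s in (-1:ℝ)..1, (1 - |s| ^ p) ^ (-(1:ℝ)/p))
    (sinp : ℝ → ℝ)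
    (hrange : ∀ t ∈ Set.Icc (-(pip/2)) (pip/2), sinp t ∈ Set.Icc (-1:ℝ) 1)
    (hdef : ∀ t ∈ Set.Icc (-(pip/2)) (pip/2),
      t = ∫ s in (0:ℝ)..(sinp t), (1 - |s| ^ p) ^ (-(1:ℝ)/p)) :
    ∀ t ∈ Set.Ioo (-(pip/2)) (pip/2),
      HasDerivAt (fun s => |deriv sinp s| ^ (p-2) * deriv sinp s)
        (-(p-1) * |sinp t| ^ (p-2) * sinp t) t := by
  have hone : pArcsin p 1 = pip / 2 := by
    rw [hpip, eq_div_iff two_ne_zero, mul_comm]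
    exact two_mul_pArcsin_one hp
  have hm_one : pArcsin p (-1) = -(pip / 2) := by rw [pArcsin_neg, hone]
  rw [← hm_one, ← hone] at hrange hdef ⊢
  have hinv : LeftInvOn (pArcsin p) sinp (Icc (pArcsin p (-1)) (pArcsin p 1)) :=
    fun t ht => (hdef t ht).symm
  have hmem := mapsTo_Ioo_of_leftInvOn hrange hinv
  intro t ht
  refine hasDerivAt_abs_deriv_rpow_mul_deriv hp ?_ (abs_lt.2 (hmem ht))
  filter_upwards [Ioo_mem_nhds ht.1 ht.2] with s hs
  rw [← inv_pSineIntegrand (by linarith) (hmem hs)]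
  exact hasDerivAt_of_leftInvOn (strictMonoOn_pArcsin hp) hrange hinv hs
    (hasDerivAt_pArcsin hp (hmem hs)) (pSineIntegrand_pos (by linarith) (hmem hs)).ne'
end

section
/- Let p > 1, λ > 0, α = (λ/(p-1))^{1/p}, and let T : I → ℝ be Lipschitz on an interval I. If w solves (d/dt)((w')^{(p-1)}) - T(t)(w')^{(p-1)} + λ w^{(p-1)} = 0 and (e, φ) are defined by the Prüfer transformation αw = e sin_p(φ), w' = e cos_p(φ) with e > 0, then φ' = α - (T/(p-1)) cos_p^{p-1}(φ) sin_p(φ) and (log e)' = (T/(p-1)) cos_p^p(φ), at every point where w and w' do not vanish simultaneously. -/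
open Real Filter Topology Set

/-!
Differentiating `α w = e sin_p φ` and `φ_p(w') = e^{p-1} φ_p(cos_p φ)`, and using the equation
together with `λ = (p-1) α^p`, gives two linear equations for `φ'` and `e'/e`; their determinant
is `-(p-1)` by `|sin_p|^p + |cos_p|^p = 1`. The second equation needs the derivative of
`φ_p(cos_p φ)` in terms of `φ'`, obtained from `|φ_p(cos_p φ)|^{p/(p-1)} = 1 - |sin_p φ|^p`; it
is only informative where `cos_p φ ≠ 0`. At a zero of `cos_p φ` the derivative of `φ_p(cos_p φ)`
is `-(p-1) α sin_p φ ≠ 0`, so the zero is isolated, and `φ'` there is the limit of its values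
nearby, which is `α`.
-/

/-- `φ_p(w) = |w|^{p-2} w`, written `w^{(p-1)}` in the statement. -/
noncomputable def phiP (p x : ℝ) : ℝ := |x| ^ (p - 2) * x

section phiP

variable {p : ℝ}

@[simp] lemma phiP_zero (p : ℝ) : phiP p 0 = 0 := by simp [phiP]

lemma phiP_ne_zero {x : ℝ} (hx : x ≠ 0) : phiP p x ≠ 0 :=
  mul_ne_zero (rpow_pos_of_pos (abs_pos.mpr hx) _).ne' hx

lemma abs_phiP (hp : 1 < p) (x : ℝ) : |phiP p x| = |x| ^ (p - 1) := by
  rcases eq_or_ne x 0 with rfl | hx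
  · simp [zero_rpow (sub_ne_zero.mpr hp.ne')]
  · rw [phiP, abs_mul, abs_of_nonneg (rpow_nonneg (abs_nonneg x) _),
      ← rpow_add_one (abs_ne_zero.mpr hx)]
    ring_nf

lemma mul_phiP (hp : 1 < p) (x : ℝ) : x * phiP p x = |x| ^ p := by
  rcases eq_or_ne x 0 with rfl | hx
  · simp [zero_rpow (by linarith : p ≠ 0)]
  · have hx' : |x| ≠ 0 := abs_ne_zero.mpr hx
    calc x * phiP p x = |x| ^ (p - 2) * |x| * |x| := by
          rw [phiP, mul_assoc, abs_mul_abs_self]; ring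
    _ = |x| ^ p := by rw [← rpow_add_one hx', ← rpow_add_one hx']; ring_nf

lemma phiP_mul_of_pos {a : ℝ} (ha : 0 < a) (x : ℝ) :
    phiP p (a * x) = a ^ (p - 1) * phiP p x := by
  rw [phiP, phiP, abs_mul, abs_of_pos ha, mul_rpow ha.le (abs_nonneg x),
    show p - 1 = p - 2 + 1 by ring, rpow_add_one ha.ne']
  ring

lemma phiP_conj_phiP (hp : 1 < p) (x : ℝ) : phiP (p / (p - 1)) (phiP p x) = x := by
  rcases eq_or_ne x 0 with rfl | hx
  · simp
  · have hp1 : p - 1 ≠ 0 := sub_ne_zero.mpr hp.ne'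
    rw [phiP, abs_phiP hp, ← rpow_mul (abs_nonneg x), phiP, ← mul_assoc,
      ← rpow_add (abs_pos.mpr hx), show (p - 1) * (p / (p - 1) - 2) + (p - 2) = 0 by
        field_simp; ring, rpow_zero, one_mul]

lemma abs_phiP_rpow_conj (hp : 1 < p) (x : ℝ) : |phiP p x| ^ (p / (p - 1)) = |x| ^ p := by
  rw [abs_phiP hp, ← rpow_mul (abs_nonneg x), mul_div_cancel₀ _ (sub_ne_zero.mpr hp.ne')]

lemma hasDerivAt_abs_rpow_eq_phiP (hp : 1 < p) (x : ℝ) :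
    HasDerivAt (fun y : ℝ => |y| ^ p) (p * phiP p x) x := by
  simpa only [phiP, mul_assoc] using hasDerivAt_abs_rpow x hp

end phiP

/-- Obtained by differentiating `|φ_p(v)|^q = 1 - |u|^p`, `q = p/(p-1)`. -/
lemma mul_deriv_phiP_of_abs_rpow_add_eq_one {p : ℝ} (hp : 1 < p) {u v : ℝ → ℝ} {t u' G' : ℝ}
    (huv : ∀ s, |u s| ^ p + |v s| ^ p = 1) (hu : HasDerivAt u u' t)
    (hG : HasDerivAt (fun s => phiP p (v s)) G' t) :
    v t * G' = -(p - 1) * phiP p (u t) * u' := by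
  have hp1 : p - 1 ≠ 0 := sub_ne_zero.mpr hp.ne'
  have hq : 1 < p / (p - 1) := by rw [lt_div_iff₀ (by linarith)]; linarith
  have hcircle : (fun s => |phiP p (v s)| ^ (p / (p - 1))) = fun s => 1 - |u s| ^ p := by
    funext s
    rw [abs_phiP_rpow_conj hp, ← huv s]
    ring
  have hlhs : HasDerivAt (fun s => 1 - |u s| ^ p)
      (p / (p - 1) * phiP (p / (p - 1)) (phiP p (v t)) * G') t := by
    rw [← hcircle]
    exact (hasDerivAt_abs_rpow_eq_phiP hq _).comp t hG
  have hrhs := ((hasDerivAt_abs_rpow_eq_phiP hp _).comp t hu).const_sub 1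
  have h := hlhs.unique hrhs
  rw [phiP_conj_phiP hp] at h
  field_simp at h
  linear_combination h

lemma eq_of_hasDerivAt_of_tendsto {f f' : ℝ → ℝ} {x L : ℝ}
    (hf : ∀ᶠ y in 𝓝 x, HasDerivAt f (f' y) y) (hlim : Tendsto f' (𝓝[≠] x) (𝓝 L)) :
    f' x = L := by
  set s := {y | HasDerivAt f (f' y) y}
  have hdiff : DifferentiableOn ℝ f s := fun y hy => hy.differentiableAt.differentiableWithinAt
  have hright : HasDerivWithinAt f L (Ici x) x := by
    refine hasDerivWithinAt_Ici_of_tendsto_deriv hdiff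
      hf.self_of_nhds.continuousAt.continuousWithinAt (nhdsWithin_le_nhds hf) ?_
    refine (hlim.mono_left (nhdsWithin_mono _ fun y hy => ne_of_gt hy)).congr' ?_
    filter_upwards [nhdsWithin_le_nhds hf] with y hy using hy.deriv.symm
  exact (uniqueDiffWithinAt_Ici x).eq_deriv _ hf.self_of_nhds.hasDerivWithinAt hright

lemma pruefer_system_solve {p α T S C x y : ℝ} (hp : 1 < p)
    (htrig : |S| ^ p + |C| ^ p = 1)
    (hamp : y * S + C * x = α * C)
    (hphase : (p - 1) * (phiP p C * y - phiP p S * x) = T * phiP p C - (p - 1) * α * phiP p S) :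
    x = α - T / (p - 1) * phiP p C * S ∧ y = T / (p - 1) * |C| ^ p := by
  have hp1 : p - 1 ≠ 0 := sub_ne_zero.mpr hp.ne'
  rw [← mul_phiP hp, ← mul_phiP hp] at htrig
  have hx : (p - 1) * x = (p - 1) * α - T * phiP p C * S := by
    linear_combination -S * hphase + (p - 1) * phiP p C * hamp - (p - 1) * (x - α) * htrig
  have hy : (p - 1) * y = T * phiP p C * C := by
    linear_combination C * hphase + (p - 1) * phiP p S * hamp - (p - 1) * y * htrig
  rw [← mul_phiP hp]
  constructor
  · field_simp
    linear_combination hx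
  · field_simp
    linear_combination hy

lemma pruefer_sin_relation_deriv {α t e' φ' : ℝ} {w w' e φ sinp cosp : ℝ → ℝ}
    (hw : HasDerivAt w (w' t) t) (he : HasDerivAt e e' t) (hφ : HasDerivAt φ φ' t)
    (hsinp' : HasDerivAt sinp (cosp (φ t)) (φ t)) (he0 : e t ≠ 0)
    (hsin : ∀ᶠ s in 𝓝 t, α * w s = e s * sinp (φ s)) (hcos : w' t = e t * cosp (φ t)) :
    e' / e t * sinp (φ t) + cosp (φ t) * φ' = α * cosp (φ t) := by
  have h := ((hw.const_mul α).congr_of_eventuallyEq (hsin.mono fun s hs => hs.symm)).unique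
    (he.mul (hsinp'.comp t hφ))
  rw [hcos] at h
  field_simp
  linear_combination -h

lemma pruefer_hasDerivAt_phiP_cos {p lam α T t S e' : ℝ} {w w' e C : ℝ → ℝ}
    (hα : 0 < α) (hlam : lam = (p - 1) * α ^ p)
    (hode : HasDerivAt (fun s => phiP p (w' s)) (T * phiP p (w' t) - lam * phiP p (w t)) t)
    (he : HasDerivAt e e' t) (hepos : ∀ᶠ s in 𝓝 t, 0 < e s)
    (hcos : ∀ᶠ s in 𝓝 t, w' s = e s * C s) (hsin : α * w t = e t * S) :
    HasDerivAt (fun s => phiP p (C s))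
      (T * phiP p (C t) - (p - 1) * (α * phiP p S + e' / e t * phiP p (C t))) t := by
  have he0 : 0 < e t := hepos.self_of_nhds
  have hquot := hode.div (he.rpow_const (p := p - 1) (Or.inl he0.ne'))
    (rpow_pos_of_pos he0 _).ne'
  have hG : (fun s => phiP p (w' s) / e s ^ (p - 1)) =ᶠ[𝓝 t] fun s => phiP p (C s) := by
    filter_upwards [hepos, hcos] with s hs hc
    rw [hc, phiP_mul_of_pos hs]
    field_simp [(rpow_pos_of_pos hs (p - 1)).ne']
  refine (hquot.congr_of_eventuallyEq hG.symm).congr_deriv ?_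
  have hw : w t = e t / α * S := by field_simp; linear_combination hsin
  rw [hcos.self_of_nhds, hw, phiP_mul_of_pos he0, phiP_mul_of_pos (div_pos he0 hα),
    div_rpow he0.le hα.le, hlam, rpow_sub_one he0.ne' (p - 1),
    show α ^ p = α ^ (p - 1) * α by rw [← rpow_add_one hα.ne']; ring_nf]
  have : 0 < e t ^ (p - 1) := rpow_pos_of_pos he0 _
  have : 0 < α ^ (p - 1) := rpow_pos_of_pos hα _
  field_simp
  ring

lemma pruefer_of_cos_ne_zero {p α T t φ' y : ℝ} {φ sinp cosp : ℝ → ℝ} (hp : 1 < p)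
    (htrig : ∀ x, |sinp x| ^ p + |cosp x| ^ p = 1) (hsinp' : ∀ x, HasDerivAt sinp (cosp x) x)
    (hφ : HasDerivAt φ φ' t) (hamp : y * sinp (φ t) + cosp (φ t) * φ' = α * cosp (φ t))
    (hG : HasDerivAt (fun s => phiP p (cosp (φ s)))
      (T * phiP p (cosp (φ t)) - (p - 1) * (α * phiP p (sinp (φ t)) + y * phiP p (cosp (φ t)))) t)
    (hC : cosp (φ t) ≠ 0) :
    φ' = α - T / (p - 1) * phiP p (cosp (φ t)) * sinp (φ t) ∧
      y = T / (p - 1) * |cosp (φ t)| ^ p := by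
  have h := mul_deriv_phiP_of_abs_rpow_add_eq_one hp (fun s => htrig (φ s))
    ((hsinp' _).comp t hφ) hG
  refine pruefer_system_solve hp (htrig _) hamp (mul_left_cancel₀ hC ?_)
  linear_combination -h

lemma pruefer_of_cos_eq_zero {p α t y : ℝ} {T φ φ' sinp cosp : ℝ → ℝ} (hp : 1 < p) (hα : 0 < α)
    (htrig : |sinp (φ t)| ^ p + |cosp (φ t)| ^ p = 1) (hC : cosp (φ t) = 0)
    (hφ : ∀ᶠ s in 𝓝 t, HasDerivAt φ (φ' s) s) (hT : ContinuousAt T t)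
    (hsinp' : HasDerivAt sinp (cosp (φ t)) (φ t))
    (hG : HasDerivAt (fun s => phiP p (cosp (φ s)))
      (T t * phiP p (cosp (φ t)) - (p - 1) * (α * phiP p (sinp (φ t)) + y * phiP p (cosp (φ t)))) t)
    (hregular : ∀ᶠ s in 𝓝 t, cosp (φ s) ≠ 0 →
      φ' s = α - T s / (p - 1) * phiP p (cosp (φ s)) * sinp (φ s))
    (hamp : y * sinp (φ t) + cosp (φ t) * φ' t = α * cosp (φ t)) :
    φ' t = α - T t / (p - 1) * phiP p (cosp (φ t)) * sinp (φ t) ∧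
      y = T t / (p - 1) * |cosp (φ t)| ^ p := by
  have hp0 : p ≠ 0 := by linarith
  have hS : sinp (φ t) ≠ 0 := by
    rintro hS
    simp [hS, hC, zero_rpow hp0] at htrig
  have hCne : ∀ᶠ s in 𝓝[≠] t, cosp (φ s) ≠ 0 := by
    have hG' : T t * phiP p (cosp (φ t)) -
        (p - 1) * (α * phiP p (sinp (φ t)) + y * phiP p (cosp (φ t))) ≠ 0 := by
      simpa [hC, sub_eq_zero, hα.ne', phiP_ne_zero hS] using (by linarith : p - 1 ≠ 0)
    filter_upwards [hG.eventually_ne (c := 0) hG'] with s hs hCs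
    simp [hCs] at hs
  have hg : ContinuousAt (fun s => α - T s / (p - 1) * phiP p (cosp (φ s)) * sinp (φ s)) t :=
    continuousAt_const.sub (((hT.div_const _).mul hG.continuousAt).mul
      (hsinp'.comp t hφ.self_of_nhds).continuousAt)
  have hφ' := eq_of_hasDerivAt_of_tendsto hφ <| (hg.tendsto.mono_left nhdsWithin_le_nhds).congr' <|
    by filter_upwards [hCne, nhdsWithin_le_nhds hregular] with s hCs hs using (hs hCs).symm
  have hy : y = 0 := by simpa [hC, hS] using hamp
  simp [hφ', hy, hC, zero_rpow hp0]

/-- Prüfer transformation: if `w` solves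
`((w')^{(p-1)})' - T (w')^{(p-1)} + λ w^{(p-1)} = 0` and `α w = e sin_p φ`,
`w' = e cos_p φ` with `e > 0`, then wherever `w` and `w'` do not vanish
simultaneously, `φ' = α - (T/(p-1)) cos_p^{p-1}(φ) sin_p(φ)` and
`(log e)' = e'/e = (T/(p-1)) cos_p^p(φ)`. -/
theorem pruefer_transformation
    (p lam α : ℝ) (hp : 1 < p) (hlam : 0 < lam)
    (hα : α = (lam / (p-1)) ^ ((1:ℝ)/p))
    (I : Set ℝ) (hI : IsOpen I)
    (T w w' e e' φ φ' sinp cosp : ℝ → ℝ)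
    (hTlip : LipschitzOnWith 1 T I)
    (htrig : ∀ x : ℝ, |sinp x| ^ p + |cosp x| ^ p = 1)
    (hsinp' : ∀ x : ℝ, HasDerivAt sinp (cosp x) x)
    (hw : ∀ t ∈ I, HasDerivAt w (w' t) t)
    (hode : ∀ t ∈ I, HasDerivAt (fun s => |w' s| ^ (p-2) * w' s)
      (T t * (|w' t| ^ (p-2) * w' t) - lam * (|w t| ^ (p-2) * w t)) t)
    (he : ∀ t ∈ I, HasDerivAt e (e' t) t)
    (hφ : ∀ t ∈ I, HasDerivAt φ (φ' t) t)
    (hepos : ∀ t ∈ I, 0 < e t)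
    (hsin : ∀ t ∈ I, α * w t = e t * sinp (φ t))
    (hcos : ∀ t ∈ I, w' t = e t * cosp (φ t)) :
    ∀ t ∈ I, ¬ (w t = 0 ∧ w' t = 0) →
      φ' t = α - (T t / (p-1)) * (|cosp (φ t)| ^ (p-2) * cosp (φ t)) * sinp (φ t)
      ∧ e' t / e t = (T t / (p-1)) * |cosp (φ t)| ^ p := by
  have hp1 : 0 < p - 1 := by linarith
  have hbase : 0 < lam / (p - 1) := div_pos hlam hp1
  have hαpos : 0 < α := hα ▸ rpow_pos_of_pos hbase _
  have hlam' : lam = (p - 1) * α ^ p := by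
    rw [hα, ← rpow_mul hbase.le, one_div_mul_cancel (by linarith), rpow_one]
    field_simp
  have hI' : ∀ s ∈ I, ∀ᶠ r in 𝓝 s, r ∈ I := fun s hs => hI.mem_nhds hs
  have hamp : ∀ s ∈ I, e' s / e s * sinp (φ s) + cosp (φ s) * φ' s = α * cosp (φ s) :=
    fun s hs => pruefer_sin_relation_deriv (hw s hs) (he s hs) (hφ s hs) (hsinp' _) (hepos s hs).ne'
      ((hI' s hs).mono hsin) (hcos s hs)
  have hG : ∀ s ∈ I, HasDerivAt (fun r => phiP p (cosp (φ r))) (T s * phiP p (cosp (φ s)) -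
      (p - 1) * (α * phiP p (sinp (φ s)) + e' s / e s * phiP p (cosp (φ s)))) s :=
    fun s hs => pruefer_hasDerivAt_phiP_cos hαpos hlam' (hode s hs) (he s hs)
      ((hI' s hs).mono hepos) ((hI' s hs).mono hcos) (hsin s hs)
  have hregular : ∀ s ∈ I, cosp (φ s) ≠ 0 →
      φ' s = α - T s / (p - 1) * phiP p (cosp (φ s)) * sinp (φ s) ∧
        e' s / e s = T s / (p - 1) * |cosp (φ s)| ^ p :=
    fun s hs hC => pruefer_of_cos_ne_zero hp htrig hsinp' (hφ s hs) (hamp s hs) (hG s hs) hC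
  intro t ht _
  obtain hC | hC := ne_or_eq (cosp (φ t)) 0
  · exact hregular t ht hC
  · exact pruefer_of_cos_eq_zero hp hαpos (htrig _) hC ((hI' t ht).mono hφ)
      (hTlip.continuousOn.continuousAt (hI.mem_nhds ht)) (hsinp' _) (hG t ht)
      ((hI' t ht).mono fun s hs hC => (hregular s hs hC).1) (hamp t ht)
end

section
/- With ρ(x) = cos^{n-1}(√κ x) and T fixed with -π/(2√κ) < t ≤ x ≤ T < π/(2√κ), the quantity ∫_t^x ρ(t)/ρ(y) dy is bounded by a constant C depending only on n and T (uniformly in t and x). -/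
/-!
Write `s = √κ`. For `t ≤ y ≤ T` the points `s t ≤ s y ≤ s T` lie in `(-π/2, π/2)`, where `cos`
is concave, so `cos (s y) ≥ min (cos (s t)) (cos (s T)) ≥ cos (s t) * cos (s T)`. Hence the
integrand `(cos (s t) / cos (s y)) ^ (n - 1)` is at most `(cos (s T))⁻¹ ^ (n - 1)`, and the
integral is at most that constant times the length `T + π / (2 s)` of the admissible interval.
-/

open Real Set

lemma cos_mul_cos_le_cos_of_mem_Icc {a y b : ℝ} (ha : -(π / 2) ≤ a) (hb : b ≤ π / 2)
    (hy : y ∈ Icc a b) : cos a * cos b ≤ cos y := by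
  have hab : a ≤ b := hy.1.trans hy.2
  have hIcc : ∀ z, a ≤ z → z ≤ b → z ∈ Icc (-(π / 2)) (π / 2) := fun z hz₁ hz₂ =>
    ⟨ha.trans hz₁, hz₂.trans hb⟩
  have hmin : min (cos a) (cos b) ≤ cos y :=
    strictConcaveOn_cos_Icc.concaveOn.min_le_of_mem_Icc (hIcc a le_rfl hab) (hIcc b hab le_rfl) hy
  have hca : 0 ≤ cos a := cos_nonneg_of_mem_Icc (hIcc a le_rfl hab)
  have hcb : 0 ≤ cos b := cos_nonneg_of_mem_Icc (hIcc b hab le_rfl)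
  refine le_trans ?_ hmin
  rcases min_choice (cos a) (cos b) with h | h <;> rw [h]
  · exact mul_le_of_le_one_right hca (cos_le_one b)
  · exact mul_le_of_le_one_left hcb (cos_le_one a)

lemma norm_cos_rpow_div_cos_rpow_le {a y b p : ℝ} (ha : -(π / 2) < a) (hb : b < π / 2)
    (hy : y ∈ Icc a b) (hp : 0 ≤ p) : ‖cos a ^ p / cos y ^ p‖ ≤ (cos b)⁻¹ ^ p := by
  have hpos : ∀ z, a ≤ z → z ≤ b → 0 < cos z := fun z hz₁ hz₂ =>
    cos_pos_of_mem_Ioo ⟨ha.trans_le hz₁, hz₂.trans_lt hb⟩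
  have hca := hpos a le_rfl (hy.1.trans hy.2)
  have hcy := hpos y hy.1 hy.2
  have hcb := hpos b (hy.1.trans hy.2) le_rfl
  have hratio : cos a / cos y ≤ (cos b)⁻¹ := by
    rw [div_le_iff₀ hcy, inv_mul_eq_div, le_div_iff₀ hcb]
    exact cos_mul_cos_le_cos_of_mem_Icc ha.le hb.le hy
  rw [norm_of_nonneg (by positivity), ← div_rpow hca.le hcy.le]
  exact rpow_le_rpow (by positivity) hratio hp

/-- With `ρ(x) = cos^{n-1}(√κ x)` and `T` fixed, the quantity
`∫_t^x ρ(t)/ρ(y) dy` is bounded by a constant depending only on `n` and `T`,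
uniformly in `-π/(2√κ) < t ≤ x ≤ T`. -/
theorem rho_integral_uniform_bound
    (κ n T : ℝ) (hκ : 0 < κ) (hn : 1 ≤ n) (hT : T < π / (2 * Real.sqrt κ))
    (ρ : ℝ → ℝ) (hρ : ∀ x : ℝ, ρ x = Real.cos (Real.sqrt κ * x) ^ (n-1)) :
    ∃ C : ℝ, ∀ t x : ℝ, -(π / (2 * Real.sqrt κ)) < t → t ≤ x → x ≤ T →
      |∫ y in t..x, ρ t / ρ y| ≤ C := by
  set s := Real.sqrt κ
  have hs : 0 < s := sqrt_pos.mpr hκ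
  set M := (cos (s * T))⁻¹ ^ (n - 1)
  refine ⟨M * (T + π / (2 * s)), fun t x ht htx hxT => ?_⟩
  have hst : -(π / 2) < s * t := by
    rwa [← div_div, ← neg_div, div_lt_iff₀' hs] at ht
  have hsT : s * T < π / 2 := by
    rwa [← div_div, lt_div_iff₀' hs] at hT
  have hbound : ∀ y ∈ uIoc t x, ‖ρ t / ρ y‖ ≤ M := by
    intro y hy
    rw [uIoc_of_le htx] at hy
    rw [hρ, hρ]
    exact norm_cos_rpow_div_cos_rpow_le hst hsT
      ⟨by gcongr; exact hy.1.le, by gcongr; exact hy.2.trans hxT⟩ (by linarith)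
  have hM : 0 ≤ M := rpow_nonneg (inv_nonneg.mpr (cos_nonneg_of_mem_Icc
    ⟨hst.le.trans (by gcongr; exact htx.trans hxT), hsT.le⟩)) _
  calc |∫ y in t..x, ρ t / ρ y| ≤ M * |x - t| :=
        intervalIntegral.norm_integral_le_of_norm_le_const hbound
    _ ≤ M * (T + π / (2 * s)) := by
        rw [abs_of_nonneg (sub_nonneg.mpr htx)]
        gcongr
        linarith
end

section
/- Let κ > 0, n ≥ 1, λ ∈ ℝ, p > 1, and let w_a denote the solution on [a, T] of (d/dt)((w')^{(p-1)}) − (n−1)√κ tan(√κ t)(w')^{(p-1)} + λ w^{(p-1)} = 0 with w(a) = −1, w'(a) = 0, for a ∈ [−π/(2√κ), T). Then for each fixed x ∈ (−π/(2√κ), T], w_a(x) → w_{−π/(2√κ)}(x) and w_a'(x) → w'_{−π/(2√κ)}(x) as a → −π/(2√κ)⁺. -/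
/-!
Away from `a₀ = -π/(2√κ)` the equation reads `w'' = -λ w + (n-1)√κ tan(√κ t) w'`. Its drift
coefficient blows up at `a₀`, but only towards `-∞`, so it is bounded above by some `M ≥ 0` on
`(a₀, x]`. That one-sided bound is all the energy estimate
`(u² + u'²)' ≤ (|1-λ| + 2M)(u² + u'²)` for the difference `u = w_a - w_{a₀}` needs, so
Gronwall bounds the energy at `x` by the energy at `a`, namely
`(-1 - w_{a₀}(a))² + w_{a₀}'(a)²`. The first term vanishes as `a → a₀⁺` by continuity. For the
second, integrating `(ρ w_{a₀}')' = -λρ w_{a₀}` from the singular endpoint and using that `ρ` is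
increasing near it gives `|w_{a₀}'(a)| ≤ |λ| ‖w_{a₀}‖_∞ (a - a₀)`.
-/

open Real Set Filter Topology

theorem HasDerivAt.of_mul_of_ne_zero {ρ v : ℝ → ℝ} {ρ' g t : ℝ} (hρ : HasDerivAt ρ ρ' t)
    (hρt : ρ t ≠ 0) (h : HasDerivAt (fun y => ρ y * v y) g t) :
    HasDerivAt v ((g - ρ' * v t) / ρ t) t := by
  have heq : (fun y => ρ y * v y / ρ y) =ᶠ[𝓝 t] v :=
    (hρ.continuousAt.eventually_ne hρt).mono fun y hy => mul_div_cancel_left₀ _ hy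
  refine ((h.div hρ hρt).congr_of_eventuallyEq heq.symm).congr_deriv ?_
  field_simp

theorem tendsto_zero_nhdsGT_of_weighted_deriv_le {ρ v g : ℝ → ℝ} {a₀ b C : ℝ} (hC : 0 ≤ C)
    (hb : a₀ < b) (hmono : MonotoneOn ρ (Icc a₀ b)) (hpos : ∀ a ∈ Ioc a₀ b, 0 < ρ a)
    (hderiv : ∀ t ∈ Icc a₀ b, HasDerivAt (fun y => ρ y * v y) (g t) t)
    (hg : ∀ t ∈ Icc a₀ b, |g t| ≤ C * ρ t) (h₀ : ρ a₀ * v a₀ = 0) :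
    Tendsto v (𝓝[>] a₀) (𝓝 0) := by
  have hlin : ∀ a ∈ Ioc a₀ b, ‖v a‖ ≤ C * (a - a₀) := by
    intro a ha
    have hsub : Icc a₀ a ⊆ Icc a₀ b := Icc_subset_Icc_right ha.2
    have hbound : ∀ t ∈ Icc a₀ a, ‖g t‖ ≤ C * ρ a := fun t ht =>
      (hg t (hsub ht)).trans <| mul_le_mul_of_nonneg_left
        (hmono (hsub ht) (hsub (right_mem_Icc.2 ha.1.le)) ht.2) hC
    have hmvt := (convex_Icc a₀ a).norm_image_sub_le_of_norm_hasDerivWithin_le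
      (fun t ht => (hderiv t (hsub ht)).hasDerivWithinAt) hbound
      (left_mem_Icc.2 ha.1.le) (right_mem_Icc.2 ha.1.le)
    rw [h₀, sub_zero, norm_mul, norm_of_nonneg (hpos a ha).le,
      norm_of_nonneg (sub_nonneg.2 ha.1.le), mul_right_comm] at hmvt
    exact le_of_mul_le_mul_left (by linarith) (hpos a ha)
  have hlim : Tendsto (fun a => C * (a - a₀)) (𝓝[>] a₀) (𝓝 0) := by
    have hcont : Continuous fun a => C * (a - a₀) := by fun_prop
    simpa using (hcont.tendsto a₀).mono_left nhdsWithin_le_nhds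
  exact squeeze_zero_norm' (eventually_of_mem (Ioc_mem_nhdsGT hb) hlin) hlim

theorem sq_add_sq_le_mul_exp_of_linear_ode {u u' b : ℝ → ℝ} {lam M a x : ℝ} (hM : 0 ≤ M)
    (hax : a ≤ x) (hu : ∀ t ∈ Icc a x, HasDerivAt u (u' t) t)
    (hu' : ∀ t ∈ Icc a x, HasDerivAt u' (-lam * u t + b t * u' t) t)
    (hb : ∀ t ∈ Ico a x, b t ≤ M) :
    u x ^ 2 + u' x ^ 2 ≤ (u a ^ 2 + u' a ^ 2) * exp ((|1 - lam| + 2 * M) * (x - a)) := by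
  set F : ℝ → ℝ := fun t => u t ^ 2 + u' t ^ 2
  set F' : ℝ → ℝ := fun t => 2 * u t * u' t + 2 * u' t * (-lam * u t + b t * u' t)
  have hF : ∀ t ∈ Icc a x, HasDerivAt F (F' t) t := fun t ht =>
    (((hu t ht).pow 2).add ((hu' t ht).pow 2)).congr_deriv (by simp only [F']; ring)
  have hF' : ∀ t ∈ Ico a x, F' t ≤ (|1 - lam| + 2 * M) * F t + 0 := by
    intro t ht
    -- `2 (1 - λ) u u' ≤ |1 - λ| (u² + u'²)`, written as two nonnegative squares
    have h₁ : 0 ≤ (|1 - lam| - (1 - lam)) * (u t + u' t) ^ 2 :=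
      mul_nonneg (by linarith [le_abs_self (1 - lam)]) (sq_nonneg _)
    have h₂ : 0 ≤ (|1 - lam| + (1 - lam)) * (u t - u' t) ^ 2 :=
      mul_nonneg (by linarith [neg_abs_le (1 - lam)]) (sq_nonneg _)
    have h₃ := mul_le_mul_of_nonneg_right (hb t ht) (sq_nonneg (u' t))
    have h₄ := mul_nonneg hM (sq_nonneg (u t))
    simp only [F, F']
    nlinarith
  have := le_gronwallBound_of_liminf_deriv_right_le
    (fun t ht => (hF t ht).continuousAt.continuousWithinAt)
    (fun t ht r hr => (hF t (Ico_subset_Icc_self ht)).hasDerivWithinAt.liminf_right_slope_le hr)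
    le_rfl hF' x (right_mem_Icc.2 hax)
  rwa [gronwallBound_ε0] at this

theorem tendsto_of_sq_add_sq_le {α : Type*} {l : Filter α} {f g h : α → ℝ} {c d : ℝ}
    (hle : ∀ᶠ a in l, (f a - c) ^ 2 + (g a - d) ^ 2 ≤ h a) (hh : Tendsto h l (𝓝 0)) :
    Tendsto f l (𝓝 c) ∧ Tendsto g l (𝓝 d) := by
  have hsqrt : Tendsto (fun a => √(h a)) l (𝓝 0) := by simpa using hh.sqrt
  constructor <;> rw [tendsto_iff_dist_tendsto_zero] <;>
    refine squeeze_zero' (.of_forall fun _ => dist_nonneg) (hle.mono fun a ha => ?_) hsqrt <;>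
    rw [dist_eq] <;> apply abs_le_sqrt <;> nlinarith [sq_nonneg (f a - c), sq_nonneg (g a - d)]

theorem Real.mul_mem_Ioo_neg_pi_div_two {s t : ℝ} (hs : 0 < s)
    (ht : t ∈ Ioo (-(π / (2 * s))) (π / (2 * s))) : s * t ∈ Ioo (-(π / 2)) (π / 2) := by
  have h : s * (π / (2 * s)) = π / 2 := by field_simp
  constructor <;> nlinarith [ht.1, ht.2]

theorem Real.mul_mem_Icc_neg_pi_div_two {s t : ℝ} (hs : 0 < s)
    (ht : t ∈ Icc (-(π / (2 * s))) (π / (2 * s))) : s * t ∈ Icc (-(π / 2)) (π / 2) := by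
  have h : s * (π / (2 * s)) = π / 2 := by field_simp
  constructor <;> nlinarith [ht.1, ht.2]

theorem Real.tan_mul_le_tan_mul {s t x : ℝ} (hs : 0 < s) (ht : -(π / (2 * s)) < t) (htx : t ≤ x)
    (hx : x < π / (2 * s)) : tan (s * t) ≤ tan (s * x) :=
  strictMonoOn_tan.monotoneOn (mul_mem_Ioo_neg_pi_div_two hs ⟨ht, htx.trans_lt hx⟩)
    (mul_mem_Ioo_neg_pi_div_two hs ⟨ht.trans_le htx, hx⟩) (mul_le_mul_of_nonneg_left htx hs.le)

theorem Real.hasDerivAt_cos_mul_rpow (r s t : ℝ) (h : 0 < cos (s * t)) :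
    HasDerivAt (fun y => cos (s * y) ^ r) (-(r * s * tan (s * t)) * cos (s * t) ^ r) t := by
  have hlin : HasDerivAt (fun y => cos (s * y)) (-sin (s * t) * s) t := by
    simpa using ((hasDerivAt_id t).const_mul s).cos
  refine ((hasDerivAt_rpow_const (p := r) (Or.inl h.ne')).comp t hlin).congr_deriv ?_
  rw [rpow_sub h, rpow_one, tan_eq_sin_div_cos]
  field_simp

theorem Real.monotoneOn_cos_mul_rpow {r s : ℝ} (hr : 0 ≤ r) (hs : 0 < s) :
    MonotoneOn (fun y => cos (s * y) ^ r) (Icc (-(π / (2 * s))) 0) := by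
  intro y hy z hz hyz
  have hsy := mul_mem_Icc_neg_pi_div_two hs ⟨hy.1, hy.2.trans (by positivity)⟩
  refine rpow_le_rpow (cos_nonneg_of_mem_Icc hsy) ?_ hr
  rw [← cos_neg (s * y), ← cos_neg (s * z)]
  exact cos_le_cos_of_nonneg_of_le_pi (by nlinarith [hz.2]) (by linarith [hsy.1, pi_pos])
    (by nlinarith)

theorem hasDerivAt_of_hasDerivAt_cos_rpow_mul {f v : ℝ → ℝ} {r s lam t : ℝ}
    (hc : 0 < cos (s * t))
    (h : HasDerivAt (fun y => cos (s * y) ^ r * v y) (-(lam * cos (s * t) ^ r * f t)) t) :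
    HasDerivAt v (-lam * f t + r * s * tan (s * t) * v t) t := by
  refine ((hasDerivAt_cos_mul_rpow r s t hc).of_mul_of_ne_zero (rpow_pos_of_pos hc r).ne'
    h).congr_deriv ?_
  field_simp
  ring

theorem tendsto_zero_nhdsGT_of_hasDerivAt_cos_rpow_mul {f v : ℝ → ℝ} {r s lam T : ℝ}
    (hr : 0 ≤ r) (hs : 0 < s) (hT : -(π / (2 * s)) < T)
    (hf : ContinuousOn f (Icc (-(π / (2 * s))) T))
    (h : ∀ t ∈ Icc (-(π / (2 * s))) T,
      HasDerivAt (fun y => cos (s * y) ^ r * v y) (-(lam * cos (s * t) ^ r * f t)) t)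
    (h₀ : v (-(π / (2 * s))) = 0) :
    Tendsto v (𝓝[>] (-(π / (2 * s)))) (𝓝 0) := by
  obtain ⟨W, hW⟩ := isCompact_Icc.exists_bound_of_continuousOn hf
  have hb : -(π / (2 * s)) < min 0 T := lt_min (neg_neg_of_pos (by positivity)) hT
  have hsub : Icc (-(π / (2 * s))) (min 0 T) ⊆ Icc (-(π / (2 * s))) T :=
    Icc_subset_Icc_right (min_le_right _ _)
  have hcos : ∀ t ∈ Icc (-(π / (2 * s))) (min 0 T), 0 ≤ cos (s * t) := fun t ht =>
    cos_nonneg_of_mem_Icc (mul_mem_Icc_neg_pi_div_two hs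
      ⟨ht.1, ht.2.trans ((min_le_left _ _).trans (by positivity))⟩)
  refine tendsto_zero_nhdsGT_of_weighted_deriv_le (C := |lam| * W)
    (mul_nonneg (abs_nonneg _) ((norm_nonneg _).trans (hW _ (left_mem_Icc.2 hT.le)))) hb
    ((monotoneOn_cos_mul_rpow hr hs).mono (Icc_subset_Icc_right (min_le_left _ _)))
    (fun a ha => rpow_pos_of_pos ?_ _) (fun t ht => h t (hsub ht)) (fun t ht => ?_) (by simp [h₀])
  · exact cos_pos_of_mem_Ioo (mul_mem_Ioo_neg_pi_div_two hs
      ⟨ha.1, ha.2.trans_lt ((min_le_left _ _).trans_lt (by positivity))⟩)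
  · have hρt : 0 ≤ cos (s * t) ^ r := rpow_nonneg (hcos t ht) _
    rw [abs_neg, abs_mul, abs_mul, abs_of_nonneg hρt, mul_right_comm]
    exact mul_le_mul_of_nonneg_right
      (mul_le_mul_of_nonneg_left (hW t (hsub ht)) (abs_nonneg _)) hρt

theorem sq_add_sq_sub_le_of_hasDerivAt_cos_rpow_mul {w₁ w₂ w₁' w₂' : ℝ → ℝ} {r s lam a x : ℝ}
    (hr : 0 ≤ r) (hs : 0 < s) (ha : -(π / (2 * s)) < a) (hax : a ≤ x) (hx : x < π / (2 * s))
    (hw₁ : ∀ t ∈ Icc a x, HasDerivAt w₁ (w₁' t) t) (hw₂ : ∀ t ∈ Icc a x, HasDerivAt w₂ (w₂' t) t)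
    (hw₁' : ∀ t ∈ Icc a x,
      HasDerivAt (fun y => cos (s * y) ^ r * w₁' y) (-(lam * cos (s * t) ^ r * w₁ t)) t)
    (hw₂' : ∀ t ∈ Icc a x,
      HasDerivAt (fun y => cos (s * y) ^ r * w₂' y) (-(lam * cos (s * t) ^ r * w₂ t)) t) :
    (w₁ x - w₂ x) ^ 2 + (w₁' x - w₂' x) ^ 2 ≤ ((w₁ a - w₂ a) ^ 2 + (w₁' a - w₂' a) ^ 2) *
      exp ((|1 - lam| + 2 * max (r * s * tan (s * x)) 0) * (x - a)) := by
  have hcos : ∀ t ∈ Icc a x, 0 < cos (s * t) := fun t ht =>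
    cos_pos_of_mem_Ioo (mul_mem_Ioo_neg_pi_div_two hs ⟨ha.trans_le ht.1, ht.2.trans_lt hx⟩)
  refine sq_add_sq_le_mul_exp_of_linear_ode (u := fun t => w₁ t - w₂ t)
    (u' := fun t => w₁' t - w₂' t) (b := fun t => r * s * tan (s * t)) (le_max_right _ _) hax
    (fun t ht => (hw₁ t ht).sub (hw₂ t ht)) (fun t ht => ?_) (fun t ht => ?_)
  · exact ((hasDerivAt_of_hasDerivAt_cos_rpow_mul (hcos t ht) (hw₁' t ht)).sub
      (hasDerivAt_of_hasDerivAt_cos_rpow_mul (hcos t ht) (hw₂' t ht))).congr_deriv (by ring)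
  · exact (mul_le_mul_of_nonneg_left (tan_mul_le_tan_mul hs (ha.trans_le ht.1) ht.2.le hx)
      (mul_nonneg hr hs.le)).trans (le_max_left _ _)

/-- Continuous dependence on the left endpoint up to the singular endpoint
`-π/(2√κ)` (case `p = 2`): if `w a` solves `(ρ (w a)')' + λ ρ (w a) = 0` on
`(a, T]` with `w a (a) = -1`, `(w a)'(a) = 0`, where `ρ(x) = cos^{n-1}(√κ x)`,
then for each fixed `x`, `w a x → w a₀ x` and `(w a)'(x) → (w a₀)'(x)` as
`a → a₀⁺ := -π/(2√κ)⁺`. -/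
theorem continuous_dependence_left_endpoint
    (κ lam n T : ℝ) (hκ : 0 < κ) (hn : 1 ≤ n) (hT : T < π / (2 * Real.sqrt κ))
    (hTa : -(π / (2 * Real.sqrt κ)) < T)
    (ρ : ℝ → ℝ) (hρ : ∀ x : ℝ, ρ x = Real.cos (Real.sqrt κ * x) ^ (n-1))
    (w w' : ℝ → ℝ → ℝ)
    (hinit : ∀ a ∈ Set.Ico (-(π / (2 * Real.sqrt κ))) T,
      w a a = -1 ∧ w' a a = 0)
    (hder : ∀ a ∈ Set.Ico (-(π / (2 * Real.sqrt κ))) T,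
      ∀ x ∈ Set.Icc a T, HasDerivAt (w a) (w' a x) x)
    (hode : ∀ a ∈ Set.Ico (-(π / (2 * Real.sqrt κ))) T,
      ∀ x ∈ Set.Icc a T,
        HasDerivAt (fun y => ρ y * w' a y) (-(lam * ρ x * w a x)) x) :
    ∀ x ∈ Set.Ioc (-(π / (2 * Real.sqrt κ))) T,
      Filter.Tendsto (fun a => w a x)
        (nhdsWithin (-(π / (2 * Real.sqrt κ))) (Set.Ioi (-(π / (2 * Real.sqrt κ)))))
        (nhds (w (-(π / (2 * Real.sqrt κ))) x))
      ∧ Filter.Tendsto (fun a => w' a x)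
        (nhdsWithin (-(π / (2 * Real.sqrt κ))) (Set.Ioi (-(π / (2 * Real.sqrt κ)))))
        (nhds (w' (-(π / (2 * Real.sqrt κ))) x)) := by
  rintro x ⟨hx₀, hxT⟩
  obtain rfl : ρ = fun y => cos (√κ * y) ^ (n - 1) := funext hρ
  set s := √κ
  set a₀ := -(π / (2 * s))
  have hs : 0 < s := sqrt_pos.2 hκ
  have ha₀ : a₀ ∈ Ico a₀ T := ⟨le_rfl, hTa⟩
  have hw₀ : Tendsto (w a₀) (𝓝[>] a₀) (𝓝 (-1)) := by
    simpa [(hinit a₀ ha₀).1] using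
      (hder a₀ ha₀ a₀ ⟨le_rfl, hTa.le⟩).continuousAt.tendsto.mono_left nhdsWithin_le_nhds
  have hw₀' : Tendsto (w' a₀) (𝓝[>] a₀) (𝓝 0) :=
    tendsto_zero_nhdsGT_of_hasDerivAt_cos_rpow_mul (sub_nonneg.2 hn) hs hTa
      (fun t ht => (hder a₀ ha₀ t ht).continuousAt.continuousWithinAt) (hode a₀ ha₀)
      (hinit a₀ ha₀).2
  set K := |1 - lam| + 2 * max ((n - 1) * s * tan (s * x)) 0
  have henergy : ∀ a ∈ Ioo a₀ x, (w a x - w a₀ x) ^ 2 + (w' a x - w' a₀ x) ^ 2 ≤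
      ((-1 - w a₀ a) ^ 2 + w' a₀ a ^ 2) * exp (K * (x - a)) := by
    rintro a ⟨ha₀a, hax⟩
    have ha : a ∈ Ico a₀ T := ⟨ha₀a.le, hax.trans_le hxT⟩
    have hsub : Icc a x ⊆ Icc a T := Icc_subset_Icc_right hxT
    have hsub₀ : Icc a x ⊆ Icc a₀ T := Icc_subset_Icc ha₀a.le hxT
    simpa [hinit a ha] using sq_add_sq_sub_le_of_hasDerivAt_cos_rpow_mul (sub_nonneg.2 hn) hs
      ha₀a hax.le (hxT.trans_lt hT) (fun t ht => hder a ha t (hsub ht))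
      (fun t ht => hder a₀ ha₀ t (hsub₀ ht)) (fun t ht => hode a ha t (hsub ht))
      (fun t ht => hode a₀ ha₀ t (hsub₀ ht))
  refine tendsto_of_sq_add_sq_le (eventually_of_mem (Ioo_mem_nhdsGT hx₀) henergy) ?_
  have hexp : Continuous fun a => exp (K * (x - a)) := by fun_prop
  simpa using ((((tendsto_const_nhds (x := (-1 : ℝ))).sub hw₀).pow 2).add (hw₀'.pow 2)).mul
    ((hexp.tendsto a₀).mono_left nhdsWithin_le_nhds)
end
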